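/- For d ≥ 1 and x, y in the Euclidean ball of radius R in ℝ^d, with w uniform on S^{d-1} and b uniform on [-R,R], independent: E[ 1_{⟨w,x⟩+b>0} · 1_{⟨w,y⟩+b>0} ] = 1/2 - (1/(4R)) · (Γ(1)Γ(d/2)/(Γ(1/2)Γ((d+1)/2))) · ‖x-y‖. -/

import Mathlib

/-! For a unit vector `w`, the average over `b ∈ [-R, R]` of `1_{a+b>0} 1_{c+b>0}` is
`1/2 + (a + c)/(4R) - |a - c|/(4R)` with `a = ⟪w, x⟫`, `c = ⟪w, y⟫`. Averaging over `w`, the linear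
term vanishes by the symmetry `w ↦ -w`, and rotation invariance gives
`E|⟪w, v⟫| = c_d ‖v‖`. The constant `c_d` is found by integrating `|⟪w, z⟫| e^{-π‖z‖²}` over
`w ∼ μ` and `z ∈ ℝ^d` in both orders: integrating first in `z` gives `1/π` (a one-dimensional
Gaussian moment), integrating first in `w` gives `c_d ∫ ‖z‖ e^{-π‖z‖²} dz`, computed in polar
coordinates. -/

open MeasureTheory Real intervalIntegral

/-- Truncated power `(u)_+^α`, with the convention `(u)_+^0 = 1_{u>0}`. -/
noncomputable def truncPow (α : ℕ) (u : ℝ) : ℝ := if 0 < u then u ^ α else 0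

open Set Module
open scoped RealInnerProductSpace

lemma truncPow_zero_add (a b : ℝ) : truncPow 0 (a + b) = (Ioi (-a)).indicator 1 b := by
  simp only [truncPow, pow_zero, indicator, mem_Ioi, Pi.one_apply, neg_lt_iff_pos_add']

lemma integral_truncPow_zero_mul_truncPow_zero {a c R : ℝ} (ha : |a| ≤ R) (hc : |c| ≤ R) :
    ∫ b in (-R)..R, truncPow 0 (a + b) * truncPow 0 (c + b) = R + (a + c) / 2 - |a - c| / 2 := by
  obtain ⟨ha₁, ha₂⟩ := abs_le.1 ha
  obtain ⟨hc₁, hc₂⟩ := abs_le.1 hc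
  have hprod (b : ℝ) :
      truncPow 0 (a + b) * truncPow 0 (c + b) = (Ioi (-a ⊔ -c)).indicator 1 b := by
    rw [truncPow_zero_add, truncPow_zero_add, ← Pi.mul_apply, ← inter_indicator_one,
      Ioi_inter_Ioi]
  simp only [hprod]
  rw [integral_of_le (by linarith), integral_indicator_one measurableSet_Ioi,
    measureReal_restrict_apply measurableSet_Ioi, inter_comm, Ioc_inter_Ioi,
    sup_eq_right.2 (le_sup_of_le_left (by linarith)),
    Real.volume_real_Ioc_of_le (sup_le (by linarith) (by linarith))]
  rcases le_total a c with h | h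
  · rw [abs_of_nonpos (by linarith), sup_eq_left.2 (neg_le_neg h)]; ring
  · rw [abs_of_nonneg (by linarith), sup_eq_right.2 (neg_le_neg h)]; ring

lemma average_truncPow_zero_mul_truncPow_zero {a c R : ℝ} (hR : 0 < R) (ha : |a| ≤ R)
    (hc : |c| ≤ R) :
    1 / (2 * R) * ∫ b in (-R)..R, truncPow 0 (a + b) * truncPow 0 (c + b) =
      1 / 2 + (a + c) / (4 * R) - |a - c| / (4 * R) := by
  rw [integral_truncPow_zero_mul_truncPow_zero ha hc]
  field_simp
  ring

lemma integral_abs_mul_exp_neg_pi_mul_sq : ∫ t : ℝ, |t| * exp (-π * t ^ 2) = π⁻¹ := by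
  have h := integral_comp_abs (f := fun t => t * exp (-π * t ^ 2))
  simp only [sq_abs] at h
  have hrpow : ∀ t ∈ Ioi (0 : ℝ), t * exp (-π * t ^ 2) = t ^ (1 : ℝ) * exp (-π * t ^ (2 : ℝ)) :=
    fun t _ => by rw [rpow_one, rpow_two]
  rw [h, setIntegral_congr_fun measurableSet_Ioi hrpow,
    integral_rpow_mul_exp_neg_mul_rpow two_pos (by norm_num) pi_pos]
  norm_num [Gamma_one, rpow_neg_one]
  ring

lemma integral_abs_apply_mul_exp_neg_pi_sum_sq {ι : Type*} [Fintype ι] [DecidableEq ι] (i : ι) :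
    ∫ ξ : ι → ℝ, |ξ i| * exp (-π * ∑ j, ξ j ^ 2) = π⁻¹ := by
  have hprod (ξ : ι → ℝ) : |ξ i| * exp (-π * ∑ j, ξ j ^ 2) =
      ∏ j, (if j = i then |ξ j| else 1) * exp (-π * ξ j ^ 2) := by
    rw [Finset.prod_mul_distrib, Finset.prod_ite_eq', if_pos (Finset.mem_univ i), Finset.mul_sum,
      Real.exp_sum]
  have hfactor (j : ι) : ∫ t, (if j = i then |t| else 1) * exp (-π * t ^ 2) =
      if j = i then π⁻¹ else 1 := by
    split_ifs
    · exact integral_abs_mul_exp_neg_pi_mul_sq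
    · simp only [one_mul, integral_gaussian, div_self pi_ne_zero, sqrt_one]
  simp only [hprod]
  rw [volume_pi,
    integral_fintype_prod_eq_prod (fun j t => (if j = i then |t| else 1) * exp (-π * t ^ 2))]
  simp only [hfactor, Finset.prod_ite_eq', Finset.mem_univ, if_true]

section InnerProductSpace

variable {E : Type*} [NormedAddCommGroup E] [InnerProductSpace ℝ E] [MeasurableSpace E]
  [BorelSpace E] {μ : Measure E}

lemma integral_inner_left_eq_zero [μ.IsNegInvariant] (v : E) : ∫ w, ⟪w, v⟫ ∂μ = 0 := by
  have h := integral_neg_eq_self (fun w => ⟪w, v⟫) μ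
  simp only [inner_neg_left, MeasureTheory.integral_neg] at h
  linarith

lemma integral_comp_inner_norm_eq_of_norm_eq {F : Type*} [NormedAddCommGroup F]
    [NormedSpace ℝ F] (hμ : ∀ e : E ≃ₗᵢ[ℝ] E, μ.map e = μ) (f : ℝ → ℝ → F) {u v : E}
    (huv : ‖u‖ = ‖v‖) : ∫ w, f ⟪w, u⟫ ‖w‖ ∂μ = ∫ w, f ⟪w, v⟫ ‖w‖ ∂μ := by
  set e : E ≃ₗᵢ[ℝ] E := Submodule.reflection (ℝ ∙ (u - v))ᗮ
  calc ∫ w, f ⟪w, u⟫ ‖w‖ ∂μ = ∫ w, f ⟪e w, e u⟫ ‖e w‖ ∂μ := by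
        simp only [LinearIsometryEquiv.inner_map_map, LinearIsometryEquiv.norm_map]
    _ = ∫ w, f ⟪w, e u⟫ ‖w‖ ∂μ.map e :=
        (integral_map_equiv e.toHomeomorph.toMeasurableEquiv (fun w => f ⟪w, e u⟫ ‖w‖)).symm
    _ = ∫ w, f ⟪w, v⟫ ‖w‖ ∂μ := by rw [hμ, Submodule.reflection_sub huv]

lemma integral_abs_inner_eq_norm_mul (hμ : ∀ e : E ≃ₗᵢ[ℝ] E, μ.map e = μ) {u : E}
    (hu : ‖u‖ = 1) (v : E) : ∫ w, |⟪w, v⟫| ∂μ = ‖v‖ * ∫ w, |⟪w, u⟫| ∂μ := by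
  have hnorm : ‖v‖ = ‖‖v‖ • u‖ := by rw [norm_smul, hu, norm_norm, mul_one]
  rw [integral_comp_inner_norm_eq_of_norm_eq hμ (fun a _ => |a|) hnorm,
    ← MeasureTheory.integral_const_mul]
  simp only [inner_smul_right, abs_mul, abs_norm]

variable [FiniteDimensional ℝ E]

lemma integral_abs_inner_mul_exp_neg_pi_norm_sq {u : E} (hu : ‖u‖ = 1) :
    ∫ z, |⟪z, u⟫| * exp (-π * ‖z‖ ^ 2) = π⁻¹ := by
  have : Nontrivial E := ⟨u, 0, by rintro rfl; simp at hu⟩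
  let b := stdOrthonormalBasis ℝ E
  let i : Fin (finrank ℝ E) := ⟨0, finrank_pos⟩
  let coords : E ≃ᵐ (Fin (finrank ℝ E) → ℝ) :=
    b.measurableEquiv.trans (MeasurableEquiv.toLp 2 _).symm
  have hcoords : MeasurePreserving coords :=
    (PiLp.volume_preserving_ofLp _).comp b.measurePreserving_measurableEquiv
  have hrot : ∫ z, |⟪z, u⟫| * exp (-π * ‖z‖ ^ 2) = ∫ z, |⟪z, b i⟫| * exp (-π * ‖z‖ ^ 2) :=
    integral_comp_inner_norm_eq_of_norm_eq (fun e => e.measurePreserving.map_eq)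
      (fun a r => |a| * exp (-π * r ^ 2)) (by rw [hu, b.orthonormal.1 i])
  have hcoord (z : E) : |⟪z, b i⟫| * exp (-π * ‖z‖ ^ 2) =
      |coords z i| * exp (-π * ∑ j, coords z j ^ 2) := by
    have happly (j) : coords z j = ⟪z, b j⟫ :=
      (b.repr_apply_apply z j).trans (real_inner_comm _ _)
    rw [← b.repr.norm_map, EuclideanSpace.norm_sq_eq]
    simp only [Real.norm_eq_abs, sq_abs, happly, b.repr_apply_apply, real_inner_comm]
  rw [hrot, funext hcoord,
    hcoords.integral_comp' (g := fun ξ => |ξ i| * exp (-π * ∑ j, ξ j ^ 2)),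
    integral_abs_apply_mul_exp_neg_pi_sum_sq]

variable [Nontrivial E]

lemma integral_norm_mul_exp_neg_pi_norm_sq :
    ∫ z : E, ‖z‖ * exp (-π * ‖z‖ ^ 2) =
      Gamma ((finrank ℝ E + 1) / 2) / (√π * Gamma (finrank ℝ E / 2)) := by
  rw [integral_fun_norm_addHaar volume (fun r => r * exp (-π * r ^ 2))]
  set n := finrank ℝ E
  have hn : 0 < n := finrank_pos
  have hball : volume.real (Metric.ball (0 : E) 1) = √π ^ n / Gamma (n / 2 + 1) := by
    rw [Measure.real, InnerProductSpace.volume_ball, ENNReal.ofReal_one, one_pow, one_mul,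
      ENNReal.toReal_ofReal (by positivity)]
  have hradial : ∫ y in Ioi (0 : ℝ), y ^ (n - 1) * (y * exp (-π * y ^ 2)) =
      π ^ (-((n : ℝ) + 1) / 2) * (1 / 2) * Gamma (((n : ℝ) + 1) / 2) := by
    rw [← integral_rpow_mul_exp_neg_mul_rpow two_pos (by linarith [n.cast_nonneg (α := ℝ)])
      pi_pos]
    refine setIntegral_congr_fun measurableSet_Ioi fun y _ => ?_
    rw [← mul_assoc, ← pow_succ, Nat.sub_add_cancel hn, rpow_two, rpow_natCast]
  have hsqrt : √π ^ n = π ^ ((n : ℝ) / 2) := by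
    rw [sqrt_eq_rpow, ← rpow_natCast, ← rpow_mul pi_pos.le]; ring_nf
  have hpow : π ^ (-((n : ℝ) + 1) / 2) = (√π)⁻¹ * (π ^ ((n : ℝ) / 2))⁻¹ := by
    rw [sqrt_eq_rpow, ← rpow_neg pi_pos.le, ← rpow_neg pi_pos.le, ← rpow_add pi_pos]; ring_nf
  have hΓ : Gamma ((n : ℝ) / 2) ≠ 0 := (Gamma_pos_of_pos (by positivity)).ne'
  simp only [smul_eq_mul, nsmul_eq_mul]
  rw [hball, hradial, Gamma_add_one (by positivity), hsqrt, hpow]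
  field_simp

lemma integrable_abs_inner_mul_exp_neg_pi_norm_sq [IsFiniteMeasure μ]
    (hsphere : ∀ᵐ w ∂μ, ‖w‖ = 1) :
    Integrable (fun p : E × E => |⟪p.1, p.2⟫| * exp (-π * ‖p.2‖ ^ 2)) (μ.prod volume) := by
  have hn : (0 : ℝ) < finrank ℝ E := by exact_mod_cast finrank_pos
  have hdom : Integrable (fun z : E => ‖z‖ * exp (-π * ‖z‖ ^ 2)) :=
    .of_integral_ne_zero (by rw [integral_norm_mul_exp_neg_pi_norm_sq]; positivity)
  refine (hdom.comp_snd μ).mono' (by fun_prop) ?_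
  filter_upwards [Measure.quasiMeasurePreserving_fst.ae hsphere] with p hp
  rw [norm_of_nonneg (by positivity)]
  gcongr
  exact (abs_real_inner_le_norm _ _).trans (by rw [hp, one_mul])

theorem integral_abs_inner_eq_of_ae_norm_eq_one [IsProbabilityMeasure μ]
    (hsphere : ∀ᵐ w ∂μ, ‖w‖ = 1) (hμ : ∀ e : E ≃ₗᵢ[ℝ] E, μ.map e = μ) (v : E) :
    ∫ w, |⟪w, v⟫| ∂μ = Gamma (finrank ℝ E / 2) / (√π * Gamma ((finrank ℝ E + 1) / 2)) * ‖v‖ := by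
  obtain ⟨u, hu⟩ := exists_norm_eq E zero_le_one
  set f : E → E → ℝ := fun w z => |⟪w, z⟫| * exp (-π * ‖z‖ ^ 2)
  have hfirst : ∫ w, (∫ z, f w z) ∂μ = π⁻¹ := by
    have h : ∀ᵐ w ∂μ, ∫ z, f w z = π⁻¹ := hsphere.mono fun w hw => by
      simpa only [f, real_inner_comm w] using integral_abs_inner_mul_exp_neg_pi_norm_sq hw
    simp [integral_congr_ae h]
  have hsecond : ∫ z, (∫ w, f w z ∂μ) = (∫ w, |⟪w, u⟫| ∂μ) *
      (Gamma ((finrank ℝ E + 1) / 2) / (√π * Gamma (finrank ℝ E / 2))) := by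
    rw [← integral_norm_mul_exp_neg_pi_norm_sq, ← MeasureTheory.integral_const_mul]
    congr 1 with z
    rw [MeasureTheory.integral_mul_const, integral_abs_inner_eq_norm_mul hμ hu]
    ring
  have hc : ∫ w, |⟪w, u⟫| ∂μ =
      Gamma (finrank ℝ E / 2) / (√π * Gamma ((finrank ℝ E + 1) / 2)) := by
    have h := integral_integral_swap (f := f) (integrable_abs_inner_mul_exp_neg_pi_norm_sq hsphere)
    rw [hfirst, hsecond] at h
    have hn : (0 : ℝ) < finrank ℝ E := by exact_mod_cast finrank_pos
    field_simp at h ⊢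
    refine mul_left_cancel₀ (sqrt_pos.2 pi_pos).ne' ?_
    linear_combination (∫ w, |⟪w, u⟫| ∂μ) * Gamma ((finrank ℝ E + 1) / 2) *
      mul_self_sqrt pi_pos.le - h
  rw [integral_abs_inner_eq_norm_mul hμ hu, hc, mul_comm]

end InnerProductSpace

/-- For `d ≥ 1`, `x, y` in the Euclidean ball of radius `R` in `ℝ^d`, `w` uniformly
distributed on the unit sphere `S^{d-1}` (a rotation-invariant probability measure `μ`
concentrated on the unit sphere) and `b` uniform on `[-R,R]`, independent:
`E[1_{⟨w,x⟩+b>0} 1_{⟨w,y⟩+b>0}] = 1/2 - (1/(4R)) Γ(1)Γ(d/2)/(Γ(1/2)Γ((d+1)/2)) ‖x-y‖`. -/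
theorem stmt15 (d : ℕ) (hd : 1 ≤ d) (R : ℝ) (hR : 0 < R)
    (μ : Measure (EuclideanSpace ℝ (Fin d))) [IsProbabilityMeasure μ]
    (hsphere : ∀ᵐ w ∂μ, ‖w‖ = 1)
    (hinv : ∀ e : EuclideanSpace ℝ (Fin d) ≃ₗᵢ[ℝ] EuclideanSpace ℝ (Fin d), μ.map e = μ)
    (x y : EuclideanSpace ℝ (Fin d)) (hx : ‖x‖ ≤ R) (hy : ‖y‖ ≤ R) :
    ∫ w, (1 / (2 * R)) * (∫ b in (-R)..R,
        truncPow 0 ((inner ℝ w x : ℝ) + b) * truncPow 0 ((inner ℝ w y : ℝ) + b)) ∂μ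
      = 1 / 2 - (1 / (4 * R)) * (Real.Gamma 1 * Real.Gamma (d / 2)
          / (Real.Gamma (1 / 2) * Real.Gamma ((d + 1) / 2))) * ‖x - y‖ := by
  have : μ.IsNegInvariant := ⟨hinv (.neg ℝ)⟩
  have : Nonempty (Fin d) := ⟨⟨0, hd⟩⟩
  have habs (v : EuclideanSpace ℝ (Fin d)) : ∀ᵐ w ∂μ, |⟪w, v⟫| ≤ ‖v‖ :=
    hsphere.mono fun w hw => (abs_real_inner_le_norm w v).trans (by rw [hw, one_mul])
  have hint (v : EuclideanSpace ℝ (Fin d)) : Integrable (fun w => ⟪w, v⟫) μ :=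
    .of_bound (by fun_prop) ‖v‖ (habs v)
  have hpointwise : ∀ᵐ w ∂μ, (1 / (2 * R)) * (∫ b in (-R)..R,
      truncPow 0 (⟪w, x⟫ + b) * truncPow 0 (⟪w, y⟫ + b)) =
        1 / 2 + ⟪w, x + y⟫ / (4 * R) - |⟪w, x - y⟫| / (4 * R) := by
    filter_upwards [habs x, habs y] with w hwx hwy
    rw [inner_add_right, inner_sub_right]
    exact average_truncPow_zero_mul_truncPow_zero hR (hwx.trans hx) (hwy.trans hy)
  have hlin : Integrable (fun w => ⟪w, x + y⟫ / (4 * R)) μ := (hint _).div_const _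
  have haffine : Integrable (fun w => 1 / 2 + ⟪w, x + y⟫ / (4 * R)) μ :=
    (integrable_const _).add hlin
  rw [integral_congr_ae hpointwise,
    MeasureTheory.integral_sub haffine ((hint _).abs.div_const _),
    MeasureTheory.integral_add (integrable_const _) hlin, MeasureTheory.integral_const,
    MeasureTheory.integral_div, MeasureTheory.integral_div, integral_inner_left_eq_zero,
    integral_abs_inner_eq_of_ae_norm_eq_one hsphere hinv, finrank_euclideanSpace_fin, Gamma_one,
    Gamma_one_half_eq]
  simp only [probReal_univ, smul_eq_mul, one_mul, zero_div, add_zero]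
  ring
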